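/- arXiv:0802.2654 — 2 statements merged into one kernel-verified Lean document; each statement's English description precedes it below -/
import Mathlib

section
/- For all n ≥ 0, g(4n+3) = g(2n+1) + 2·g(n), where g(n) is the number of odd coefficients of (1+x+x^2)^n. -/
open Polynomial

/-- The number of odd coefficients of a polynomial over ℤ. -/
noncomputable def oddCoeffCount (p : Polynomial ℤ) : ℕ :=
  (p.support.filter fun j => Odd (p.coeff j)).card

noncomputable def g (n : ℕ) : ℕ := oddCoeffCount ((1 + X + X ^ 2) ^ n)

open Finset

/-!
The odd coefficients of `T ^ n`, `T = 1 + X + X ^ 2`, form the support of its reduction mod 2,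
and over `𝔽₂` Frobenius gives `T ^ (4n+3) = T ^ 3 * Q(X ^ 4)` and `T ^ (2n+1) = T * Q(X ^ 2)`
with `Q = T ^ n`. Sorting exponents by their residue mod 4 (resp. 2),
`T ^ 3 = 1 + X + X ^ 3 + X ^ 5 + X ^ 6` splits the first into the sections `Q, (1 + X) Q, X Q, Q`
and `T` splits the second into `(1 + X) Q, Q`. Distinct residue classes do not interact, so
supports add up:
`g(4n+3) = 3 g(n) + |(1 + X) Q|` and `g(2n+1) = g(n) + |(1 + X) Q|`.
-/

namespace Polynomial

theorem card_support_X_pow_mul {R : Type*} [Semiring R] (p : R[X]) (n : ℕ) :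
    #(X ^ n * p).support = #p.support := by
  have mem {m : ℕ} (hm : m ∈ (X ^ n * p).support) : n ≤ m ∧ m - n ∈ p.support := by
    rw [mem_support_iff, coeff_X_pow_mul'] at hm
    split_ifs at hm with h
    · exact ⟨h, mem_support_iff.mpr hm⟩
    · exact absurd rfl hm
  symm
  refine Finset.card_nbij' (· + n) (· - n) (fun a ha => ?_) (fun m hm => (mem hm).2)
    (fun a _ => Nat.add_sub_cancel a n) (fun m hm => Nat.sub_add_cancel (mem hm).1)
  simpa [coeff_X_pow_mul] using ha

variable {R : Type*} [CommSemiring R]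

theorem coeff_sum_expand_mul_X_pow {k : ℕ} (hk : 0 < k) (f : Fin k → R[X]) (m : ℕ) :
    (∑ s : Fin k, expand R k (f s) * X ^ (s : ℕ)).coeff m
      = (f ⟨m % k, Nat.mod_lt m hk⟩).coeff (m / k) := by
  rw [finsetSum_coeff, Finset.sum_eq_single ⟨m % k, Nat.mod_lt m hk⟩]
  · rw [coeff_mul_X_pow', if_pos (Nat.mod_le m k), ← Nat.div_mul_self_eq_mod_sub_self,
      coeff_expand_mul hk]
  · intro s _ hs
    rw [coeff_mul_X_pow', coeff_expand hk]
    split_ifs with hsm hdvd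
    · refine absurd (Fin.ext ?_) hs
      simpa [Nat.ModEq, Nat.mod_eq_of_lt s.isLt] using (Nat.modEq_iff_dvd' hsm).mpr hdvd
    · rfl
    · rfl
  · simp

theorem card_support_sum_expand_mul_X_pow {k : ℕ} (hk : 0 < k) (f : Fin k → R[X]) :
    #(∑ s : Fin k, expand R k (f s) * X ^ (s : ℕ)).support = ∑ s, #(f s).support := by
  have hmod (s : Fin k) (j : ℕ) : (j * k + s) % k = s := by simp [Nat.mod_eq_of_lt s.isLt]
  have hdiv (s : Fin k) (j : ℕ) : (j * k + s) / k = j := by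
    rw [mul_comm, Nat.mul_add_div hk, Nat.div_eq_of_lt s.isLt, add_zero]
  rw [← Finset.card_sigma]
  symm
  refine Finset.card_nbij' (fun a => a.2 * k + a.1)
    (fun m => ⟨⟨m % k, Nat.mod_lt m hk⟩, m / k⟩)
    (fun a ha => ?_) (fun m hm => ?_) (fun a _ => ?_) (fun m _ => ?_)
  · rw [Finset.mem_coe, mem_support_iff, coeff_sum_expand_mul_X_pow hk]
    simpa [hmod, hdiv] using (Finset.mem_sigma.mp ha).2
  · simpa [coeff_sum_expand_mul_X_pow hk] using hm
  · ext
    · simp [hmod]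
    · simp [hdiv]
  · simp [Nat.div_add_mod']

end Polynomial

theorem oddCoeffCount_eq_card_support_map (p : ℤ[X]) :
    oddCoeffCount p = #(p.map (Int.castRingHom (ZMod 2))).support := by
  unfold oddCoeffCount
  congr 1
  ext j
  simp only [mem_filter, mem_support_iff, coeff_map, eq_intCast, ne_eq,
    ZMod.intCast_zmod_eq_zero_iff_dvd, Int.odd_iff]
  omega

theorem g_eq_card_support (n : ℕ) : g n = #((1 + X + X ^ 2 : (ZMod 2)[X]) ^ n).support := by
  simp [g, oddCoeffCount_eq_card_support_map, Polynomial.map_pow]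

theorem expand_four_eq_pow (f : (ZMod 2)[X]) : expand (ZMod 2) 4 f = f ^ 4 := by
  rw [show 4 = 2 * 2 from rfl, ← expand_expand, ZMod.expand_card, ZMod.expand_card, ← pow_mul]

theorem trinomial_cube_mul_expand_four (Q : (ZMod 2)[X]) :
    (1 + X + X ^ 2) ^ 3 * expand (ZMod 2) 4 Q =
      ∑ s : Fin 4, expand (ZMod 2) 4 (![Q, (1 + X) * Q, X * Q, Q] s) * X ^ (s : ℕ) := by
  simp only [Fin.sum_univ_four, Matrix.cons_val, Fin.coe_ofNat_eq_mod, Nat.reduceMod,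
    map_mul, map_add, map_one, expand_X]
  ring_nf
  -- the coefficients of the two sides agree only modulo 2
  reduce_mod_char

theorem trinomial_mul_expand_two (Q : (ZMod 2)[X]) :
    (1 + X + X ^ 2) * expand (ZMod 2) 2 Q =
      ∑ s : Fin 2, expand (ZMod 2) 2 (![(1 + X) * Q, Q] s) * X ^ (s : ℕ) := by
  simp only [Fin.sum_univ_two, Matrix.cons_val, Fin.coe_ofNat_eq_mod, Nat.reduceMod,
    map_mul, map_add, map_one, expand_X]
  ring

theorem stmt_4 : ∀ n : ℕ, g (4 * n + 3) = g (2 * n + 1) + 2 * g n := by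
  intro n
  set Q := (1 + X + X ^ 2 : (ZMod 2)[X]) ^ n
  have h4 : (1 + X + X ^ 2 : (ZMod 2)[X]) ^ (4 * n + 3) = (1 + X + X ^ 2) ^ 3 * expand _ 4 Q := by
    rw [expand_four_eq_pow, ← pow_mul, pow_add, mul_comm, mul_comm n]
  have h2 : (1 + X + X ^ 2 : (ZMod 2)[X]) ^ (2 * n + 1) = (1 + X + X ^ 2) * expand _ 2 Q := by
    rw [ZMod.expand_card, ← pow_mul, pow_succ', mul_comm n]
  have hXQ : #(X * Q).support = #Q.support := by simpa using card_support_X_pow_mul Q 1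
  rw [g_eq_card_support, g_eq_card_support, g_eq_card_support, h4, h2,
    trinomial_cube_mul_expand_four, trinomial_mul_expand_two,
    card_support_sum_expand_mul_X_pow four_pos, card_support_sum_expand_mul_X_pow two_pos]
  simp only [Fin.sum_univ_four, Fin.sum_univ_two, Matrix.cons_val, hXQ]
  ring
end

section
/- For all k ≥ 0, the number of odd coefficients of (1+x+x^2)^(2^k - 1) equals (2^(k+2) - (-1)^k)/3. -/
open Polynomial

def T (A : ℕ) : Finset ℕ :=
  (Finset.range (A+1)).filter (fun m => (2*m ≤ A → m % 3 ≠ 2) ∧ (A ≤ 2*m → (A - m) % 3 ≠ 2))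

set_option maxHeartbeats 2000000 in
lemma key (A n : ℕ) (hA : A % 2 = 0) :
    ((if 0 ≤ n ∧ (n-0) % 2 = 0 ∧ (n-0)/2 ∈ T A then (1:ZMod 2) else 0)
    + (if 1 ≤ n ∧ (n-1) % 2 = 0 ∧ (n-1)/2 ∈ T A then (1:ZMod 2) else 0))
    + (if 2 ≤ n ∧ (n-2) % 2 = 0 ∧ (n-2)/2 ∈ T A then (1:ZMod 2) else 0)
    = if n ∈ T (2*A+2) then 1 else 0 := by
  simp only [T, Finset.mem_filter, Finset.mem_range]
  rcases Nat.even_or_odd n with ⟨t, rfl⟩ | ⟨t, rfl⟩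
  · -- n = t + t
    rw [if_neg (show ¬(1 ≤ t+t ∧ (t+t-1)%2 = 0 ∧ ((t+t-1)/2 < A+1 ∧
          (2*((t+t-1)/2) ≤ A → (t+t-1)/2 % 3 ≠ 2) ∧ (A ≤ 2*((t+t-1)/2) → (A - (t+t-1)/2) % 3 ≠ 2)))
        from by omega)]
    by_cases h0 : t = 0
    · subst h0
      rw [if_pos (by omega), if_neg (by omega), if_pos (by omega)]
      norm_num
    · rw [if_congr (show (0 ≤ t+t ∧ (t+t-0)%2 = 0 ∧ ((t+t-0)/2 < A+1 ∧
            (2*((t+t-0)/2) ≤ A → (t+t-0)/2 % 3 ≠ 2) ∧ (A ≤ 2*((t+t-0)/2) → (A - (t+t-0)/2) % 3 ≠ 2))) ↔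
            (t < A+1 ∧ (2*t ≤ A → t % 3 ≠ 2) ∧ (A ≤ 2*t → (A - t) % 3 ≠ 2)) from by
          constructor <;> intro h <;> omega) rfl rfl]
      rw [if_congr (show (2 ≤ t+t ∧ (t+t-2)%2 = 0 ∧ ((t+t-2)/2 < A+1 ∧
            (2*((t+t-2)/2) ≤ A → (t+t-2)/2 % 3 ≠ 2) ∧ (A ≤ 2*((t+t-2)/2) → (A - (t+t-2)/2) % 3 ≠ 2))) ↔
            (t-1 < A+1 ∧ (2*(t-1) ≤ A → (t-1) % 3 ≠ 2) ∧ (A ≤ 2*(t-1) → (A - (t-1)) % 3 ≠ 2)) from by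
          constructor <;> intro h <;> omega) rfl rfl]
      have hsp : t % 3 = 0 ∨ t % 3 = 1 ∨ t % 3 = 2 := by omega
      have hsp2 : A % 3 = 0 ∨ A % 3 = 1 ∨ A % 3 = 2 := by omega
      split_ifs <;> first
        | decide
        | (exfalso; rcases Nat.le_total (2*t) A with h|h <;> rcases hsp with h'|h'|h' <;>
            rcases hsp2 with h''|h''|h'' <;> omega)
  · -- n = 2*t+1
    rw [if_neg (show ¬(0 ≤ 2*t+1 ∧ (2*t+1-0)%2 = 0 ∧ ((2*t+1-0)/2 < A+1 ∧
          (2*((2*t+1-0)/2) ≤ A → (2*t+1-0)/2 % 3 ≠ 2) ∧ (A ≤ 2*((2*t+1-0)/2) → (A - (2*t+1-0)/2) % 3 ≠ 2)))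
        from by omega)]
    rw [if_neg (show ¬(2 ≤ 2*t+1 ∧ (2*t+1-2)%2 = 0 ∧ ((2*t+1-2)/2 < A+1 ∧
          (2*((2*t+1-2)/2) ≤ A → (2*t+1-2)/2 % 3 ≠ 2) ∧ (A ≤ 2*((2*t+1-2)/2) → (A - (2*t+1-2)/2) % 3 ≠ 2)))
        from by omega)]
    rw [if_congr (show (1 ≤ 2*t+1 ∧ (2*t+1-1)%2 = 0 ∧ ((2*t+1-1)/2 < A+1 ∧
          (2*((2*t+1-1)/2) ≤ A → (2*t+1-1)/2 % 3 ≠ 2) ∧ (A ≤ 2*((2*t+1-1)/2) → (A - (2*t+1-1)/2) % 3 ≠ 2))) ↔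
          (2*t+1 < 2*A+2+1 ∧ (2*(2*t+1) ≤ 2*A+2 → (2*t+1) % 3 ≠ 2) ∧
            (2*A+2 ≤ 2*(2*t+1) → (2*A+2 - (2*t+1)) % 3 ≠ 2)) from by
        constructor <;> intro h <;> omega) rfl rfl]
    rw [zero_add, add_zero]

lemma sum2 (s : Finset ℕ) (a n : ℕ) :
    (∑ m ∈ s, if n = 2*m + a then (1:ZMod 2) else 0)
    = if a ≤ n ∧ (n-a) % 2 = 0 ∧ (n-a)/2 ∈ s then 1 else 0 := by
  by_cases h : a ≤ n ∧ (n-a) % 2 = 0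
  · have he : ∀ m ∈ s, (if n = 2*m + a then (1:ZMod 2) else 0) = if (n-a)/2 = m then 1 else 0 := by
      intro m _; exact if_congr (by omega) rfl rfl
    rw [Finset.sum_congr rfl he, Finset.sum_ite_eq]
    by_cases h2 : (n-a)/2 ∈ s
    · rw [if_pos h2, if_pos ⟨h.1, h.2, h2⟩]
    · rw [if_neg h2, if_neg (by tauto)]
  · rw [Finset.sum_eq_zero (fun m _ => by rw [if_neg (by omega)]), if_neg (by tauto)]

lemma sum_X_pow_eq (A : ℕ) (hA : A % 2 = 0) :
    (∑ m ∈ T A, ((X:(ZMod 2)[X])^(2*m+0) + X^(2*m+1) + X^(2*m+2)))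
      = ∑ n ∈ T (2*A+2), (X:(ZMod 2)[X])^n := by
  ext n
  rw [Polynomial.finset_sum_coeff, Polynomial.finset_sum_coeff]
  simp only [Polynomial.coeff_add, Polynomial.coeff_X_pow]
  rw [Finset.sum_add_distrib, Finset.sum_add_distrib, sum2, sum2, sum2, Finset.sum_ite_eq]
  exact key A n hA

lemma lemA : ∀ k : ℕ, ((1+X+X^2 : (ZMod 2)[X]))^(2^k-1) = ∑ m ∈ T (2^(k+1)-2), (X:(ZMod 2)[X])^m := by
  intro k
  induction k with
  | zero =>
    rw [show (2^0 - 1 : ℕ) = 0 from rfl, pow_zero, show T (2^1-2) = {0} from by decide,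
      Finset.sum_singleton, pow_zero]
  | succ k ih =>
    have h1 : (1:ℕ) ≤ 2^k := Nat.one_le_pow k 2 (by norm_num)
    have h0 : (2:ℕ)^(k+1) = 2^k*2 := pow_succ 2 k
    have h00 : (2:ℕ)^(k+2) = 2^(k+1)*2 := pow_succ 2 (k+1)
    have h2 : 2^(k+1) - 1 = (2^k-1)*2 + 1 := by omega
    rw [h2, pow_succ, pow_mul, ih, sum_pow_char 2]
    have h3 : ∀ m ∈ T (2^(k+1)-2), ((X:(ZMod 2)[X])^m)^2 = X^(2*m) := by
      intro m _; rw [← pow_mul, mul_comm]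
    rw [Finset.sum_congr rfl h3, Finset.sum_mul]
    have h4 : ∀ m ∈ T (2^(k+1)-2), (X:(ZMod 2)[X])^(2*m) * (1+X+X^2)
        = X^(2*m+0) + X^(2*m+1) + X^(2*m+2) := by
      intro m _; ring
    rw [Finset.sum_congr rfl h4, sum_X_pow_eq _ (by omega),
      show 2*(2^(k+1)-2)+2 = 2^(k+2)-2 from by omega]

lemma supp (s : Finset ℕ) : (∑ m ∈ s, (X:(ZMod 2)[X])^m).support = s := by
  ext n
  rw [Polynomial.mem_support_iff, Polynomial.finset_sum_coeff]
  simp only [Polynomial.coeff_X_pow]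
  rw [Finset.sum_ite_eq]
  by_cases h : n ∈ s <;> simp [h]

lemma occ (p : Polynomial ℤ) :
    oddCoeffCount p = (p.map (Int.castRingHom (ZMod 2))).support.card := by
  unfold oddCoeffCount
  congr 1
  ext n
  simp only [Finset.mem_filter, Polynomial.mem_support_iff, Polynomial.coeff_map]
  have hc : (Int.castRingHom (ZMod 2)) (p.coeff n) = ((p.coeff n : ℤ) : ZMod 2) := rfl
  have hz : ((p.coeff n : ℤ) : ZMod 2) = 0 ↔ (2:ℤ) ∣ p.coeff n :=
    ZMod.intCast_zmod_eq_zero_iff_dvd _ 2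
  rw [hc]
  constructor
  · rintro ⟨h1, h2⟩ h0
    rw [Int.odd_iff] at h2
    have := hz.mp h0
    omega
  · intro h
    have h2 : ¬ (2:ℤ) ∣ p.coeff n := fun hd => h (hz.mpr hd)
    refine ⟨fun h0 => h2 (h0 ▸ dvd_zero 2), ?_⟩
    rw [Int.odd_iff]
    omega

lemma cnt (N : ℕ) : ((Finset.range N).filter (fun m => m % 3 ≠ 2)).card = N - N / 3 := by
  induction N with
  | zero => simp
  | succ n ih =>
    rw [Finset.range_add_one, Finset.filter_insert]
    by_cases h : n % 3 ≠ 2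
    · rw [if_pos h, Finset.card_insert_of_notMem (by simp), ih]; omega
    · rw [if_neg h, ih]; omega

lemma cardT (A : ℕ) (hA : A % 2 = 0) :
    (T A).card = (A/2 + 1 - (A/2+1)/3) + (A/2 - (A/2)/3) := by
  have hsplit : T A = ((Finset.range (A/2+1)).filter (fun m => m % 3 ≠ 2)) ∪
      (((Finset.range (A/2)).filter (fun m => m % 3 ≠ 2)).image (fun j => A - j)) := by
    ext m
    simp only [T, Finset.mem_filter, Finset.mem_range, Finset.mem_union, Finset.mem_image]
    constructor
    · intro h
      by_cases hm : m ≤ A/2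
      · left; constructor <;> omega
      · right; exact ⟨A - m, ⟨by omega, by omega⟩, by omega⟩
    · rintro (⟨hm1, hm2⟩ | ⟨j, ⟨hj1, hj2⟩, rfl⟩)
      · refine ⟨by omega, by omega, by omega⟩
      · refine ⟨by omega, by omega, by omega⟩
  rw [hsplit, Finset.card_union_of_disjoint, Finset.card_image_of_injOn, cnt, cnt]
  · intro x hx y hy hxy
    simp only [Finset.coe_filter, Finset.mem_range, Set.mem_setOf_eq] at hx hy
    replace hxy : A - x = A - y := hxy
    omega
  · rw [Finset.disjoint_left]
    intro a ha hb
    simp only [Finset.mem_filter, Finset.mem_range, Finset.mem_image] at ha hb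
    obtain ⟨j, ⟨hj1, _⟩, hj3⟩ := hb
    omega

lemma p2m3 (k : ℕ) : 2^k % 3 = if k % 2 = 0 then 1 else 2 := by
  induction k with
  | zero => simp
  | succ n ih =>
    rw [pow_succ]
    by_cases h : n % 2 = 0
    · rw [if_pos h] at ih
      rw [if_neg (by omega)]
      omega
    · rw [if_neg h] at ih
      rw [if_pos (by omega)]
      omega

lemma hmap (n : ℕ) : ((1+X+X^2 : Polynomial ℤ)^n).map (Int.castRingHom (ZMod 2))
    = (1+X+X^2 : (ZMod 2)[X])^n := by
  rw [Polynomial.map_pow]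
  simp [Polynomial.map_add, Polynomial.map_one, Polynomial.map_pow, Polynomial.map_X]

theorem stmt_10 : ∀ k : ℕ, (3 : ℤ) * g (2 ^ k - 1) = 2 ^ (k + 2) - (-1) ^ k := by
  intro k
  have h1 : (1:ℕ) ≤ 2^k := Nat.one_le_pow k 2 (by norm_num)
  have h0 : (2:ℕ)^(k+1) = 2^k*2 := pow_succ 2 k
  have hA : (2^(k+1) - 2) % 2 = 0 := by omega
  have hg : g (2^k - 1) = (T (2^(k+1)-2)).card := by
    unfold g
    rw [occ, hmap, lemA k, supp]
  have hcard := cardT _ hA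
  have hdiv : (2^(k+1)-2)/2 = 2^k - 1 := by omega
  rw [hdiv] at hcard
  have hm3 := p2m3 k
  have hpow : (2:ℤ)^(k+2) = 4 * ((2^k : ℕ) : ℤ) := by
    push_cast
    ring
  rw [hg, hcard, hpow]
  by_cases hk : k % 2 = 0
  · rw [if_pos hk] at hm3
    have hneg : (-1:ℤ)^k = 1 := Even.neg_one_pow (Nat.even_iff.mpr hk)
    rw [hneg]
    omega
  · rw [if_neg hk] at hm3
    have hneg : (-1:ℤ)^k = -1 := Odd.neg_one_pow (Nat.odd_iff.mpr (by omega))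
    rw [hneg]
    omega
end
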